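/- If S is a subset of a direct product G × H such that the image of S under the first projection generates G and the image under the second projection generates H, and G and H have coprime orders, then S generates G × H. -/

import Mathlib

theorem Subgroup.card_dvd_card_of_map_eq_top {G G' : Type*} [Group G] [Group G'] (f : G →* G')
    {K : Subgroup G} (hK : K.map f = ⊤) : Nat.card G' ∣ Nat.card K := by
  rw [← Subgroup.card_top, ← hK]
  exact K.card_map_dvd f

/-- By Lagrange, `|K|` is divisible by both `|G|` and `|H|`, hence by `|G × H|`. -/
theorem Subgroup.eq_top_of_map_fst_eq_top_of_map_snd_eq_top {G H : Type*} [Group G] [Group H]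
    [Finite G] [Finite H] (hcop : Nat.Coprime (Nat.card G) (Nat.card H))
    {K : Subgroup (G × H)} (hfst : K.map (MonoidHom.fst G H) = ⊤)
    (hsnd : K.map (MonoidHom.snd G H) = ⊤) : K = ⊤ := by
  have hdvd : Nat.card (G × H) ∣ Nat.card K := by
    rw [Nat.card_prod]
    exact hcop.mul_dvd_of_dvd_of_dvd (card_dvd_card_of_map_eq_top _ hfst)
      (card_dvd_card_of_map_eq_top _ hsnd)
  exact K.eq_top_of_card_eq (Nat.dvd_antisymm K.card_subgroup_dvd_card hdvd)

theorem stmt_7 {G H : Type*} [Group G] [Group H] [Finite G] [Finite H]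
    (hcop : Nat.Coprime (Nat.card G) (Nat.card H))
    (S : Set (G × H))
    (h1 : Subgroup.closure (Prod.fst '' S) = (⊤ : Subgroup G))
    (h2 : Subgroup.closure (Prod.snd '' S) = (⊤ : Subgroup H)) :
    Subgroup.closure S = (⊤ : Subgroup (G × H)) :=
  Subgroup.eq_top_of_map_fst_eq_top_of_map_snd_eq_top hcop
    (by rw [MonoidHom.map_closure]; exact h1) (by rw [MonoidHom.map_closure]; exact h2)
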